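/- Let T1 and T2 be two (finite or infinite) rooted locally finite trees both containing a given word u, equipped with irreducible AUD transition matrices U1 and U2 respectively, with h-invariant measures π1 and π2 (both normalized by π(∅) = 1). If the projections of U1 and U2 onto the branch τ = [[∅,u]] coincide, i.e. U1^τ(a,b) = U2^τ(a,b) for all a,b ∈ τ, then π1(u) = π2(u). -/

import Mathlib

open scoped BigOperators ENNReal

/-- Nodes of trees are finite words over `ℕ`; the root is the empty word. -/
abbrev Word : Type := List ℕ

/-- The parent of a node: the word with its last letter removed. -/
def par (u : Word) : Word := u.dropLast

/-- A rooted locally finite tree: a set of words containing the root, closed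
under prefixes, in which every node has finitely many children. -/
def IsTree (T : Set Word) : Prop :=
  ([] : Word) ∈ T ∧
  (∀ u ∈ T, ∀ v : Word, v <+: u → v ∈ T) ∧
  (∀ u ∈ T, {i : ℕ | u ++ [i] ∈ T}.Finite)

/-- `desc T u` is the set of descendants of `u` in `T` (the subtree `T_u`). -/
def desc (T : Set Word) (u : Word) : Set Word := {w | w ∈ T ∧ u <+: w}

/-- The children of `u` in `T`. -/
def children (T : Set Word) (u : Word) : Set Word := {v | v ∈ T ∧ ∃ i : ℕ, v = u ++ [i]}

/-- A transition matrix on `T`: nonnegative entries, rows summing to 1 over `T`. -/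
def IsTransMatrix (T : Set Word) (U : Word → Word → ℝ) : Prop :=
  (∀ u ∈ T, ∀ v ∈ T, 0 ≤ U u v) ∧ ∀ u ∈ T, HasSum (fun v : T => U u (v : Word)) 1

/-- Almost upper-directed: positive transitions go to the parent or to a descendant. -/
def IsAUD (T : Set Word) (U : Word → Word → ℝ) : Prop :=
  ∀ u ∈ T, ∀ v ∈ T, 0 < U u v → v = par u ∨ v ∈ desc T u

/-- Almost lower-directed: positive transitions go to a child or to an ancestor. -/
def IsALD (T : Set Word) (D : Word → Word → ℝ) : Prop :=
  ∀ u ∈ T, ∀ v ∈ T, 0 < D u v → v ∈ children T u ∨ v <+: u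

/-- Random-walk transition matrix: positive transitions go to `u`, its parent or a child. -/
def IsRW (T : Set Word) (M : Word → Word → ℝ) : Prop :=
  ∀ u ∈ T, ∀ v ∈ T, 0 < M u v → v = u ∨ v = par u ∨ v ∈ children T u

/-- Irreducibility: any node can be reached from any other by positive transitions. -/
def IrreducibleOn (T : Set Word) (U : Word → Word → ℝ) : Prop :=
  ∀ u ∈ T, ∀ v ∈ T, ∃ (n : ℕ) (x : ℕ → Word),
    x 0 = u ∧ x n = v ∧ (∀ k ≤ n, x k ∈ T) ∧ ∀ k < n, 0 < U (x k) (x (k + 1))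

/-- The weight of a path (a list of nodes): product of the transitions along it. -/
def wgt (U : Word → Word → ℝ) : List Word → ℝ
  | x :: y :: rest => U x y * wgt U (y :: rest)
  | _ => 1

/-- A first-return loop at the root. -/
def IsLoop (T : Set Word) (γ : List Word) : Prop :=
  2 ≤ γ.length ∧ γ.head? = some ([] : Word) ∧ γ.getLast? = some ([] : Word) ∧
  (∀ x ∈ γ, x ∈ T) ∧
  ∀ k, 0 < k → k < γ.length - 1 → γ.getD k [] ≠ ([] : Word)

/-- The total weight of first-return loops at the root. -/
noncomputable def loopSum (T : Set Word) (U : Word → Word → ℝ) : ℝ :=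
  ∑' γ : {γ : List Word // IsLoop T γ}, wgt U γ.1

/-- Recurrence: the total weight of first-return loops at the root is 1. -/
def Recurrent (T : Set Word) (U : Word → Word → ℝ) : Prop := loopSum T U = 1

/-- Expected return time to the root. -/
noncomputable def returnTime (T : Set Word) (U : Word → Word → ℝ) : ℝ≥0∞ :=
  ∑' γ : {γ : List Word // IsLoop T γ},
    ((γ.1.length - 1 : ℕ) : ℝ≥0∞) * ENNReal.ofReal (wgt U γ.1)

/-- Positive recurrence: recurrent with finite expected return time. -/
def PosRecurrent (T : Set Word) (U : Word → Word → ℝ) : Prop :=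
  Recurrent T U ∧ returnTime T U < ⊤

/-- `descWeight T U a b = U(a, T_b)`, the total weight from `a` into the subtree `T_b`. -/
noncomputable def descWeight (T : Set Word) (U : Word → Word → ℝ) (a b : Word) : ℝ :=
  ∑' w : desc T b, U a (w : Word)

/-- The matrix `(Id - ᵘU)^{(u)}`: rows/columns indexed by the strict prefixes of `u`
(the prefix of length `i` corresponds to the index `i`), the column of `u` removed. -/
noncomputable def hMat (T : Set Word) (U : Word → Word → ℝ) (u : Word) :
    Matrix (Fin u.length) (Fin u.length) ℝ :=
  Matrix.of fun i j =>
    (if i = j then 1 else 0) -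
      (if (i : ℕ) ≤ (j : ℕ) + 1 then
        descWeight T U (u.take i) (u.take j) - descWeight T U (u.take i) (u.take ((j : ℕ) + 1))
       else 0)

/-- The h-invariant measure `π` of an AUD transition matrix, with `π(∅) = 1`:
`π(u) = det((Id - ᵘU)^{(u)}) / ∏_{∅ ≠ v ⪯ u} U(v, p(v))`. -/
noncomputable def hInv (T : Set Word) (U : Word → Word → ℝ) (u : Word) : ℝ :=
  (hMat T U u).det / ∏ k ∈ Finset.range u.length, U (u.take (k + 1)) (u.take k)

/-- Paths from `i` to the root whose interior stays away from the root and below height `b`. -/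
def IsEscape (T : Set Word) (i : Word) (b : ℕ) (γ : List Word) : Prop :=
  2 ≤ γ.length ∧ γ.head? = some i ∧ γ.getLast? = some ([] : Word) ∧
  (∀ x ∈ γ, x ∈ T) ∧
  ∀ k, 0 < k → k < γ.length - 1 → γ.getD k [] ≠ ([] : Word) ∧ (γ.getD k []).length < b

/-- `qval T U i b`: total weight of paths from `i` to the root staying away from the
root and below height `b` in their interior. -/
noncomputable def qval (T : Set Word) (U : Word → Word → ℝ) (i : Word) (b : ℕ) : ℝ :=
  ∑' γ : {γ : List Word // IsEscape T i b γ}, wgt U γ.1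

/-- An end of a tree: an infinite injective path starting at the root. -/
def IsEnd (T : Set Word) (p : ℕ → Word) : Prop :=
  p 0 = [] ∧ ∀ k, p (k + 1) ∈ children T (p k)

/-- `T^𝕡`: the nodes of the end `𝕡` together with the finite subtrees hanging from
its neighbors. -/
def endTree (T : Set Word) (p : ℕ → Word) : Set Word :=
  Set.range p ∪
    {v | v ∈ T ∧ ∃ w ∈ T, w <+: v ∧ w ∉ Set.range p ∧ par w ∈ Set.range p ∧ (desc T w).Finite}

/-- `projTo T p w v`: the projection `℘_𝕡` sends `w` to `v` (fixing `T^𝕡`, and sending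
any other node to its highest ancestor on `𝕡`). -/
def projTo (T : Set Word) (p : ℕ → Word) (w v : Word) : Prop :=
  (w ∈ endTree T p ∧ v = w) ∨
  (w ∉ endTree T p ∧ v ∈ Set.range p ∧ v <+: w ∧
    ∀ v' ∈ Set.range p, v' <+: w → v' <+: v)

/-- The projected transition matrix `U^𝕡` on `T^𝕡`. -/
noncomputable def projMat (T : Set Word) (p : ℕ → Word) (U : Word → Word → ℝ)
    (u v : Word) : ℝ :=
  ∑' w : {w : Word // w ∈ T ∧ projTo T p w v}, U u (w : Word)

/-- Longest common prefix of two words. -/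
def lcp : Word → Word → Word
  | a :: as, b :: bs => if a = b then a :: lcp as bs else []
  | _, _ => []

/-- Graph distance on the tree. -/
def treeDist (u v : Word) : ℕ :=
  (u.length - (lcp u v).length) + (v.length - (lcp u v).length)

/-- A first-return path from `w` to the set `B`. -/
def IsReturnPath (T : Set Word) (B : Set Word) (w : Word) (γ : List Word) : Prop :=
  2 ≤ γ.length ∧ γ.head? = some w ∧ (∀ x ∈ γ, x ∈ T) ∧
  (∀ k, 0 < k → k < γ.length - 1 → γ.getD k [] ∉ B) ∧
  ∃ z ∈ B, γ.getLast? = some z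

open Classical in
/-- `expReturn T U B w`: the expected first-return time from `w` to `B`, set to `∞`
when return to `B` is not almost sure. -/
noncomputable def expReturn (T : Set Word) (U : Word → Word → ℝ) (B : Set Word)
    (w : Word) : ℝ≥0∞ :=
  if (∑' γ : {γ : List Word // IsReturnPath T B w γ}, wgt U γ.1) = 1 then
    ∑' γ : {γ : List Word // IsReturnPath T B w γ},
      ((γ.1.length - 1 : ℕ) : ℝ≥0∞) * ENNReal.ofReal (wgt U γ.1)
  else ⊤

/-- `P(T)`: nodes with infinitely many descendants (union of the ends of `T`). -/
def Ptree (T : Set Word) : Set Word := {u | u ∈ T ∧ (desc T u).Infinite}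

/-- `Q(T) = 1 + ∑_{u ∈ P(T)} (|c_{P(T)}(u)| - 1)`, valued in `ℝ≥0∞`. -/
noncomputable def Qval (T : Set Word) : ℝ≥0∞ :=
  1 + ∑' u : Ptree T, (((children (Ptree T) (u : Word)).ncard - 1 : ℕ) : ℝ≥0∞)

/-- Complex version of `hMat`, with `λ` on the diagonal: `(λ·Id - ᵘU)^{(u)}`. -/
noncomputable def hMatC (T : Set Word) (U : Word → Word → ℝ) (lam : ℂ) (u : Word) :
    Matrix (Fin u.length) (Fin u.length) ℂ :=
  Matrix.of fun i j =>
    (if i = j then lam else 0) -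
      (if (i : ℕ) ≤ (j : ℕ) + 1 then
        ((descWeight T U (u.take i) (u.take j) : ℝ) : ℂ) -
          ((descWeight T U (u.take i) (u.take ((j : ℕ) + 1)) : ℝ) : ℂ)
       else 0)

/-- `π^{(λ)}(u) = det((λ·Id - ᵘU)^{(u)}) / ∏_{∅ ≠ v ⪯ u} U(v, p(v))`. -/
noncomputable def piLam (T : Set Word) (U : Word → Word → ℝ) (lam : ℂ) (u : Word) : ℂ :=
  (hMatC T U lam u).det /
    ∏ k ∈ Finset.range u.length, ((U (u.take (k + 1)) (u.take k) : ℝ) : ℂ)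

/-- The measure `π̄` of a random walk: `π̄(u) = ∏_j M(u[j-1],u[j]) / M(u[j],u[j-1])`. -/
noncomputable def rwInv (M : Word → Word → ℝ) (u : Word) : ℝ :=
  ∏ k ∈ Finset.range u.length, (M (u.take k) (u.take (k + 1)) / M (u.take (k + 1)) (u.take k))

/-!
The numerator of `π(u)` is a determinant built only from entries of the projection `U^τ`.
In the denominator, almost upper-directedness says that from `v` the only mass entering
`T_{p(v)}` outside `T_v` is the step to `p(v)` itself, so `U(v, p(v)) = U^τ(v, p(v))` is a
projection entry as well.
-/

section Descendants

variable {T : Set Word} {U : Word → Word → ℝ} {a : Word}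

lemma IsTree.par_mem (hT : IsTree T) (ha : a ∈ T) : par a ∈ T :=
  hT.2.1 a ha _ (List.dropLast_prefix a)

lemma par_notMem_desc (ha : a ≠ []) : par a ∉ desc T a := fun h => by
  have hlen := h.2.length_le
  have hpos := List.length_pos_iff.mpr ha
  simp only [par, List.length_dropLast] at hlen
  omega

lemma desc_subset_desc_par : desc T a ⊆ desc T (par a) :=
  fun _ hw => ⟨hw.1, (List.dropLast_prefix a).trans hw.2⟩

lemma IsTransMatrix.summable_indicator (hM : IsTransMatrix T U) (ha : a ∈ T) {s : Set Word}
    (hs : s ⊆ T) : Summable (s.indicator (U a)) := by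
  have hsum : Summable (T.indicator (U a)) :=
    summable_subtype_iff_indicator.mp (hM.2 a ha).summable
  simpa only [Set.indicator_indicator, Set.inter_eq_self_of_subset_left hs] using
    hsum.indicator s

lemma IsAUD.indicator_desc_par (hA : IsAUD T U) (hT : IsTree T) (hM : IsTransMatrix T U)
    (ha : a ∈ T) (hne : a ≠ []) :
    (desc T (par a)).indicator (U a) =
      (desc T a).indicator (U a) + Pi.single (par a) (U a (par a)) := by
  funext w
  by_cases hw_par : w = par a
  · have hmem : par a ∈ desc T (par a) := ⟨hT.par_mem ha, List.prefix_refl _⟩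
    rw [hw_par, Set.indicator_of_mem hmem, Pi.add_apply,
      Set.indicator_of_notMem (par_notMem_desc hne), Pi.single_eq_same, zero_add]
  by_cases hwa : w ∈ desc T a
  · simp [Set.indicator_of_mem (desc_subset_desc_par hwa), Set.indicator_of_mem hwa, hw_par]
  rw [Pi.add_apply, Set.indicator_of_notMem hwa, Pi.single_apply, if_neg hw_par, add_zero]
  by_cases hwp : w ∈ desc T (par a)
  · rw [Set.indicator_of_mem hwp]
    by_contra hUw
    have hpos := lt_of_le_of_ne (hM.1 a ha w hwp.1) (Ne.symm hUw)
    exact (hA a ha w hwp.1 hpos).elim hw_par hwa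
  · exact Set.indicator_of_notMem hwp _

lemma IsAUD.descWeight_par_sub_descWeight_self (hA : IsAUD T U) (hT : IsTree T)
    (hM : IsTransMatrix T U) (ha : a ∈ T) (hne : a ≠ []) :
    descWeight T U a (par a) - descWeight T U a a = U a (par a) := by
  rw [descWeight, descWeight, tsum_subtype, tsum_subtype, hA.indicator_desc_par hT hM ha hne]
  simp only [Pi.add_apply]
  rw [(hM.summable_indicator ha fun _ hw => hw.1).tsum_add (hasSum_pi_single _ _).summable,
    tsum_pi_single]
  ring

end Descendants

lemma par_take_succ {u : Word} {k : ℕ} (hk : k < u.length) : par (u.take (k + 1)) = u.take k := by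
  rw [par, List.dropLast_eq_take, List.take_take, List.length_take]
  congr 1
  omega

lemma IsAUD.descWeight_take_sub_descWeight_take_succ {T : Set Word} {U : Word → Word → ℝ}
    (hA : IsAUD T U) (hT : IsTree T) (hM : IsTransMatrix T U) {u : Word} (hu : u ∈ T) {k : ℕ}
    (hk : k < u.length) :
    descWeight T U (u.take (k + 1)) (u.take k) - descWeight T U (u.take (k + 1)) (u.take (k + 1))
      = U (u.take (k + 1)) (u.take k) := by
  have hne : u.take (k + 1) ≠ [] := List.ne_nil_of_length_pos (by rw [List.length_take]; omega)
  simpa only [par_take_succ hk] using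
    hA.descWeight_par_sub_descWeight_self hT hM (hT.2.1 u hu _ (List.take_prefix _ u)) hne

lemma hMat_eq_of_descWeight_sub_eq {T₁ T₂ : Set Word} {U₁ U₂ : Word → Word → ℝ} {u : Word}
    (h : ∀ j ≤ u.length, ∀ k < u.length,
      descWeight T₁ U₁ (u.take j) (u.take k) - descWeight T₁ U₁ (u.take j) (u.take (k + 1)) =
      descWeight T₂ U₂ (u.take j) (u.take k) - descWeight T₂ U₂ (u.take j) (u.take (k + 1))) :
    hMat T₁ U₁ u = hMat T₂ U₂ u := by
  ext i j
  simp only [hMat, Matrix.of_apply, h i i.2.le j j.2]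

theorem hInv_local_general (T₁ T₂ : Set Word) (hT₁ : IsTree T₁) (hT₂ : IsTree T₂)
    (U₁ U₂ : Word → Word → ℝ) (u : Word) (hu₁ : u ∈ T₁) (hu₂ : u ∈ T₂)
    (hM₁ : IsTransMatrix T₁ U₁) (hA₁ : IsAUD T₁ U₁)
    (hM₂ : IsTransMatrix T₂ U₂) (hA₂ : IsAUD T₂ U₂)
    (hproj₁ : ∀ j ≤ u.length, ∀ k < u.length,
      descWeight T₁ U₁ (u.take j) (u.take k) - descWeight T₁ U₁ (u.take j) (u.take (k + 1)) =
      descWeight T₂ U₂ (u.take j) (u.take k) - descWeight T₂ U₂ (u.take j) (u.take (k + 1))) :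
    hInv T₁ U₁ u = hInv T₂ U₂ u := by
  have hden : ∀ k ∈ Finset.range u.length,
      U₁ (u.take (k + 1)) (u.take k) = U₂ (u.take (k + 1)) (u.take k) := by
    intro k hk
    have hk := Finset.mem_range.mp hk
    rw [← hA₁.descWeight_take_sub_descWeight_take_succ hT₁ hM₁ hu₁ hk,
      ← hA₂.descWeight_take_sub_descWeight_take_succ hT₂ hM₂ hu₂ hk]
    exact hproj₁ (k + 1) hk k hk
  rw [hInv, hInv, hMat_eq_of_descWeight_sub_eq hproj₁, Finset.prod_congr rfl hden]

theorem hInv_local (T₁ T₂ : Set Word) (hT₁ : IsTree T₁) (hT₂ : IsTree T₂)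
    (U₁ U₂ : Word → Word → ℝ) (u : Word) (hu₁ : u ∈ T₁) (hu₂ : u ∈ T₂)
    (hM₁ : IsTransMatrix T₁ U₁) (hA₁ : IsAUD T₁ U₁) (hI₁ : IrreducibleOn T₁ U₁)
    (hM₂ : IsTransMatrix T₂ U₂) (hA₂ : IsAUD T₂ U₂) (hI₂ : IrreducibleOn T₂ U₂)
    (hproj₁ : ∀ j ≤ u.length, ∀ k < u.length,
      descWeight T₁ U₁ (u.take j) (u.take k) - descWeight T₁ U₁ (u.take j) (u.take (k + 1)) =
      descWeight T₂ U₂ (u.take j) (u.take k) - descWeight T₂ U₂ (u.take j) (u.take (k + 1)))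
    (hproj₂ : ∀ j ≤ u.length,
      descWeight T₁ U₁ (u.take j) u = descWeight T₂ U₂ (u.take j) u) :
    hInv T₁ U₁ u = hInv T₂ U₂ u :=
  hInv_local_general T₁ T₂ hT₁ hT₂ U₁ U₂ u hu₁ hu₂ hM₁ hA₁ hM₂ hA₂ hproj₁
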